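/- arXiv:2509.20708 — 2 statements merged into one kernel-verified Lean document; each statement's English description precedes it below -/
import Mathlib

section
/- Let p ≥ 5 be a prime such that the Legendre symbol (−3/p) equals −1. Then for all integers n ≥ 0 and k ≥ 0 with p ∤ n, one has b(3·p^{2k+1}·n + (p^{2k+2} − 1)/2) ≡ 0 (mod 2). -/
/-!
Modulo 2 one has `(−q;q²)_n ≡ (q;q²)_n`, so the `n`-th summand of `B(q)` reduces to
`q^n / (1 − q^{2n+1}) = Σ_m q^{n + (2n+1)m}`. Since `q^N` occurs there exactly when
`2n+1 ∣ 2N+1`, this gives `b(N) ≡ d(2N+1) (mod 2)`, with `d` the number of divisors.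
For the `N` of the theorem, `2N+1 = p^{2k+1}(6n+p)` with `p ∤ 6n+p`, so `p` occurs in `2N+1`
to an odd power, the factor `2k+2` of `d(2N+1) = ∏ (e_ℓ + 1)` is even, and so is `b(N)`.
-/

open PowerSeries Finset

/-- The `n`-th summand `q^n (−q;q²)_n / (q;q²)_{n+1}` of the second order mock theta
function `B(q)`, as a formal power series over `ℤ`.  The denominator
`(q;q²)_{n+1} = ∏_{j=0}^{n} (1 - q^{2j+1})` has constant coefficient `1`, hence is
invertible; we use `PowerSeries.invOfUnit`. -/
noncomputable def mockBterm (n : ℕ) : PowerSeries ℤ :=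
  (X : PowerSeries ℤ) ^ n
    * (∏ j ∈ range n, (1 + (X : PowerSeries ℤ) ^ (2 * j + 1)))
    * PowerSeries.invOfUnit (∏ j ∈ range (n + 1), (1 - (X : PowerSeries ℤ) ^ (2 * j + 1))) 1

/-- `B(q) = Σ_{n≥0} q^n (−q;q²)_n/(q;q²)_{n+1}`.  The `n`-th summand is divisible by
`q^n`, so the `N`-th coefficient of `B(q)` only receives contributions from the
summands with `n ≤ N`; this defines the (formal) infinite sum coefficientwise. -/
noncomputable def mockB : PowerSeries ℤ :=
  PowerSeries.mk fun N => ∑ n ∈ range (N + 1), PowerSeries.coeff N (mockBterm n)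

/-- `b n` is the coefficient of `q^n` in `B(q)`. -/
noncomputable def b (n : ℕ) : ℤ := PowerSeries.coeff n mockB

theorem Nat.odd_dvd_sub_iff_dvd_two_mul_add_one {n N : ℕ} (h : n ≤ N) :
    2 * n + 1 ∣ N - n ↔ 2 * n + 1 ∣ 2 * N + 1 := by
  have hcop : (2 * n + 1).Coprime 2 := (odd_two_mul_add_one n).coprime_two_right
  rw [show 2 * N + 1 = 2 * (N - n) + (2 * n + 1) by omega, Nat.dvd_add_left dvd_rfl,
    hcop.dvd_mul_left]

theorem Nat.card_filter_range_odd_dvd (N : ℕ) :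
    #{n ∈ range (N + 1) | 2 * n + 1 ∣ 2 * N + 1} = #(2 * N + 1).divisors := by
  have hodd {d : ℕ} (hd : d ∣ 2 * N + 1) : Odd d := (odd_two_mul_add_one N).of_dvd_nat hd
  apply card_nbij' (fun n => 2 * n + 1) (fun d => d / 2)
  · intro n hn
    simp only [coe_filter, mem_range, Set.mem_ofPred_eq] at hn
    simpa using hn.2
  · intro d hd
    simp only [coe_filter, mem_range, Set.mem_ofPred_eq, mem_coe, Nat.mem_divisors] at hd ⊢
    obtain ⟨c, rfl⟩ := hodd hd.1
    have := Nat.le_of_dvd (by omega) hd.1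
    exact ⟨by omega, by simpa [show (2 * c + 1) / 2 = c by omega] using hd.1⟩
  · intro n _
    simp only
    omega
  · intro d hd
    simp only [mem_coe, Nat.mem_divisors] at hd
    obtain ⟨c, rfl⟩ := hodd hd.1
    simp only
    omega

theorem Nat.two_dvd_card_divisors_of_odd_factorization {M p : ℕ} (hM : M ≠ 0)
    (hodd : Odd (M.factorization p)) : 2 ∣ #M.divisors := by
  have hp : p ∈ M.primeFactors := by
    rw [← Nat.support_factorization, Finsupp.mem_support_iff]
    exact hodd.pos.ne'
  rw [Nat.card_divisors hM]
  exact (even_add_one.mpr (Nat.not_even_iff_odd.mpr hodd)).two_dvd.trans (dvd_prod_of_mem _ hp)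

theorem Nat.factorization_prime_pow_mul_of_not_dvd {p m : ℕ} (hp : p.Prime) (hm : ¬ p ∣ m)
    (e : ℕ) : (p ^ e * m).factorization p = e := by
  have hm0 : m ≠ 0 := by rintro rfl; exact hm (dvd_zero p)
  rw [Nat.factorization_mul (pow_ne_zero e hp.ne_zero) hm0, Finsupp.add_apply,
    hp.factorization_pow, Finsupp.single_eq_same, Nat.factorization_eq_zero_of_not_dvd hm,
    add_zero]

namespace PowerSeries

variable {R : Type*}

noncomputable def geomSeries [Semiring R] (a : ℕ) : R⟦X⟧ :=
  mk fun m => if a ∣ m then 1 else 0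

theorem one_sub_X_pow_mul_geomSeries [Ring R] {a : ℕ} (ha : 0 < a) :
    (1 - X ^ a) * geomSeries (R := R) a = 1 := by
  ext m
  rw [sub_mul, one_mul, map_sub, coeff_one, coeff_X_pow_mul']
  simp only [geomSeries, coeff_mk]
  by_cases hm : m = 0
  · simp [hm, ha.ne']
  · by_cases ham : a ≤ m
    · simp [ham, hm, Nat.dvd_sub_iff_left ham dvd_rfl]
    · have : ¬ a ∣ m := fun h => ham (Nat.le_of_dvd (Nat.pos_of_ne_zero hm) h)
      simp [ham, this, hm]

theorem one_add_X_pow_eq_one_sub_X_pow [CommRing R] [CharP R 2] (a : ℕ) :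
    (1 + X ^ a : R⟦X⟧) = 1 - X ^ a := by
  have h2 : (2 : R⟦X⟧) = 0 := by
    rw [← map_ofNat (C (R := R)) 2, CharTwo.two_eq_zero, map_zero]
  linear_combination X ^ a * h2

theorem coeff_X_pow_mul_geomSeries [Semiring R] {n N : ℕ} (h : n ≤ N) :
    coeff N (X ^ n * geomSeries (R := R) (2 * n + 1)) =
      if 2 * n + 1 ∣ 2 * N + 1 then 1 else 0 := by
  simp only [coeff_X_pow_mul', if_pos h, geomSeries, coeff_mk,
    Nat.odd_dvd_sub_iff_dvd_two_mul_add_one h]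

end PowerSeries

theorem map_mockBterm_of_charTwo {R : Type*} [CommRing R] [CharP R 2] (n : ℕ) :
    map (Int.castRingHom R) (mockBterm n) = X ^ n * geomSeries (2 * n + 1) := by
  rw [mockBterm]
  set D : ℤ⟦X⟧ := ∏ j ∈ range (n + 1), (1 - X ^ (2 * j + 1))
  set Q : R⟦X⟧ := ∏ j ∈ range n, (1 - X ^ (2 * j + 1))
  set φ := Int.castRingHom R
  have hD : constantCoeff D = ((1 : ℤˣ) : ℤ) := by simp [D, map_prod]
  have hDinv : map φ (invOfUnit D 1) * map φ D = 1 := by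
    rw [← map_mul, invOfUnit_mul D 1 hD, map_one]
  have hmapD : map φ D = Q * (1 - X ^ (2 * n + 1)) := by
    simp [D, Q, φ, map_prod, prod_range_succ]
  have hQinv : Q * map φ (invOfUnit D 1) = geomSeries (2 * n + 1) :=
    left_inv_eq_right_inv (by rw [hmapD] at hDinv; linear_combination hDinv)
      (one_sub_X_pow_mul_geomSeries (by omega))
  have hmapP : map φ (∏ j ∈ range n, (1 + X ^ (2 * j + 1))) = Q := by
    simp [Q, φ, map_prod, one_add_X_pow_eq_one_sub_X_pow]
  rw [map_mul, map_mul, map_pow, map_X, hmapP, mul_assoc, hQinv]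

theorem b_modEq_card_divisors (N : ℕ) : b N ≡ #(2 * N + 1).divisors [ZMOD 2] := by
  apply (ZMod.intCast_eq_intCast_iff _ _ 2).mp
  rw [b, mockB, coeff_mk, Int.cast_sum]
  calc ∑ n ∈ range (N + 1), ((coeff N (mockBterm n) : ℤ) : ZMod 2)
      = ∑ n ∈ range (N + 1), if 2 * n + 1 ∣ 2 * N + 1 then (1 : ZMod 2) else 0 := by
        refine sum_congr rfl fun n hn => ?_
        rw [← eq_intCast (Int.castRingHom _), ← coeff_map, map_mockBterm_of_charTwo,
          coeff_X_pow_mul_geomSeries (Nat.lt_succ_iff.mp (mem_range.mp hn))]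
    _ = ((#(2 * N + 1).divisors : ℤ) : ZMod 2) := by
        rw [sum_boole, Nat.card_filter_range_odd_dvd, Int.cast_natCast]

theorem two_mul_add_one_eq_pow_mul {p : ℕ} (hp : Odd p) (n k : ℕ) :
    2 * (3 * p ^ (2 * k + 1) * n + (p ^ (2 * k + 2) - 1) / 2) + 1
      = p ^ (2 * k + 1) * (6 * n + p) := by
  obtain ⟨t, ht⟩ := hp.pow (n := 2 * k + 2)
  have ht' : (p ^ (2 * k + 2) - 1) / 2 = t := by omega
  rw [ht']
  rw [pow_succ] at ht
  linarith

theorem Nat.Prime.not_dvd_six_mul_add_self {p n : ℕ} (hp : p.Prime) (h5 : 5 ≤ p)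
    (hn : ¬ p ∣ n) :
    ¬ p ∣ 6 * n + p := by
  have h6 : ¬ p ∣ 6 := fun h => by
    have := Nat.le_of_dvd (by norm_num) h
    interval_cases p <;> norm_num at *
  rw [Nat.dvd_add_left dvd_rfl]
  exact fun h => (hp.dvd_mul.mp h).elim h6 hn

theorem b_mod_two_family_general (p : ℕ) [Fact p.Prime] (hp : 5 ≤ p) :
    ∀ n k : ℕ, ¬ p ∣ n →
      b (3 * p ^ (2 * k + 1) * n + (p ^ (2 * k + 2) - 1) / 2) ≡ 0 [ZMOD 2] := by
  intro n k hpn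
  have hprime : p.Prime := Fact.out
  refine (b_modEq_card_divisors _).trans (Int.modEq_zero_iff_dvd.mpr ?_)
  rw [two_mul_add_one_eq_pow_mul (hprime.odd_of_ne_two (by omega))]
  have hp_not_dvd := hprime.not_dvd_six_mul_add_self hp hpn
  refine Int.natCast_dvd_natCast.mpr
    (Nat.two_dvd_card_divisors_of_odd_factorization (p := p) (by positivity) ?_)
  rw [Nat.factorization_prime_pow_mul_of_not_dvd hprime hp_not_dvd]
  exact odd_two_mul_add_one k

/-- Let `p ≥ 5` be a prime with `(−3/p) = −1`. Then for all `n, k ≥ 0` with `p ∤ n`,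
`b(3·p^{2k+1}·n + (p^{2k+2} − 1)/2) ≡ 0 (mod 2)`. -/
theorem b_mod_two_family (p : ℕ) [Fact p.Prime] (hp : 5 ≤ p)
    (hleg : legendreSym p (-3) = -1) :
    ∀ n k : ℕ, ¬ p ∣ n →
      b (3 * p ^ (2 * k + 1) * n + (p ^ (2 * k + 2) - 1) / 2) ≡ 0 [ZMOD 2] :=
  b_mod_two_family_general p hp
end

section
/- Let p be an odd prime and let ℓ be an integer with 1 ≤ ℓ ≤ p − 1 such that the Legendre symbol ((8ℓ+1)/p) equals −1. Then for all integers n ≥ 0, b(4(pn + ℓ)) ≡ 0 (mod 8). -/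
open PowerSeries Finset

/-!
Write `B_c(q) = ∑ₙ q^{cn} (-q^c; q²)_n / (q^c; q²)_{n+1}`, so that `B = B_1`. Shifting the
summation index gives `(1 - q^c)² B_c = 1 + q^{2c} + q^{2c+2} (1 + q^c)² B_{c+2}`, an equation
that determines the family `X`-adically. The family
`G_c = ∑ₙ q^{2cn+2n²} (1 + q^{2c+4n}) (-q^c; q²)_n² / (q^c; q²)_{n+1}²` satisfies it
too, so `B = G_1`. With `s(x) = x / (1 - x)² = ∑ₖ k xᵏ` one has `(1 + x²) / (1 - x)² = 1 + 2 s(x)`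
and `(1 + x)² / (1 - x)² = 1 + 4 s(x)`, so modulo `8` the `n`-th summand of `G_1` is
`q^{2n(n+1)} (1 + 2 s(q^{2n+1}) + 4 ∑_{j<n} s(q^{2j+1}))`, and at exponents divisible by `4`
the corrections vanish. Hence `b(4m) ≡ #{n | 2n(n+1) = 4m} (mod 8)`, which is `0` unless
`8m + 1` is a square; and `8(pn + ℓ) + 1 ≡ 8ℓ + 1` is a non-residue modulo `p`.
-/

namespace MockThetaB

variable {R : Type*} [CommRing R]

/-- `∑ₙ f n` for a family with `X ^ n ∣ f n`, computed coefficientwise as in `mockB`. -/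
noncomputable def formalSum (f : ℕ → R⟦X⟧) : R⟦X⟧ :=
  mk fun N => ∑ n ∈ range (N + 1), coeff N (f n)

variable {f g : ℕ → R⟦X⟧}

lemma coeff_formalSum (f : ℕ → R⟦X⟧) (N : ℕ) :
    coeff N (formalSum f) = ∑ n ∈ range (N + 1), coeff N (f n) :=
  coeff_mk _ _

lemma coeff_formalSum_of_lt (hf : ∀ n, X ^ n ∣ f n) {N M : ℕ} (h : N < M) :
    coeff N (formalSum f) = ∑ n ∈ range M, coeff N (f n) := by
  rw [coeff_formalSum]
  refine sum_subset (range_subset_range.mpr h) fun n _ hn => ?_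
  exact X_pow_dvd_iff.mp (hf n) N (by simpa using hn)

lemma formalSum_add (f g : ℕ → R⟦X⟧) :
    formalSum (fun n => f n + g n) = formalSum f + formalSum g := by
  ext N
  simp only [coeff_formalSum, map_add, sum_add_distrib]

lemma formalSum_sub (f g : ℕ → R⟦X⟧) :
    formalSum (fun n => f n - g n) = formalSum f - formalSum g := by
  ext N
  simp only [coeff_formalSum, map_sub, sum_sub_distrib]

lemma formalSum_mul_left (a : R⟦X⟧) (hf : ∀ n, X ^ n ∣ f n) :
    formalSum (fun n => a * f n) = a * formalSum f := by
  ext N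
  rw [coeff_formalSum, coeff_mul]
  have hinner : ∀ p ∈ antidiagonal N, coeff p.1 a * coeff p.2 (formalSum f)
      = ∑ n ∈ range (N + 1), coeff p.1 a * coeff p.2 (f n) := fun p hp => by
    rw [coeff_formalSum_of_lt hf (Nat.lt_succ_of_le (HasAntidiagonal.antidiagonal.snd_le hp)),
      mul_sum]
  rw [sum_congr rfl hinner, sum_comm]
  exact sum_congr rfl fun n _ => coeff_mul _ _ _

lemma formalSum_eq_add_shift (hf : ∀ n, X ^ n ∣ f n) :
    formalSum f = f 0 + formalSum fun n => f (n + 1) := by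
  ext N
  have hlast : coeff N (f (N + 1)) = 0 := X_pow_dvd_iff.mp (hf (N + 1)) N N.lt_succ_self
  rw [map_add, coeff_formalSum, coeff_formalSum, sum_range_succ' _ N, sum_range_succ, hlast,
    add_zero, add_comm]

lemma X_pow_dvd_shift (hf : ∀ n, X ^ n ∣ f n) (n : ℕ) : X ^ n ∣ f (n + 1) :=
  (pow_dvd_pow X n.le_succ).trans (hf (n + 1))

lemma mul_formalSum_eq_of_succ {a b c : R⟦X⟧} (hf : ∀ n, X ^ n ∣ f n)
    (hg : ∀ n, X ^ n ∣ g n) (h0 : a * f 0 = b) (hsucc : ∀ n, a * f (n + 1) = c * g n) :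
    a * formalSum f = b + c * formalSum g := by
  rw [← formalSum_mul_left a hf, formalSum_eq_add_shift fun n => (hf n).mul_left a, h0]
  simp only [hsucc]
  rw [formalSum_mul_left c hg]

/-- `1 / (1 - X ^ w)`; junk for `w = 0`. -/
noncomputable def invOneSubXPow (w : ℕ) : R⟦X⟧ := invOfUnit (1 - X ^ w) 1

lemma one_sub_X_pow_mul_invOneSubXPow {w : ℕ} (hw : w ≠ 0) :
    (1 - X ^ w) * (invOneSubXPow w : R⟦X⟧) = 1 :=
  mul_invOfUnit _ _ (by simp [hw])

/-- `(-q^c; q²)_n`. -/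
noncomputable def qPochNeg (c n : ℕ) : R⟦X⟧ := ∏ j ∈ range n, (1 + X ^ (c + 2 * j))

/-- `1 / (q^c; q²)_n`. -/
noncomputable def qPochInv (c n : ℕ) : R⟦X⟧ := ∏ j ∈ range n, invOneSubXPow (c + 2 * j)

lemma qPochNeg_succ (c n : ℕ) :
    (qPochNeg c (n + 1) : R⟦X⟧) = qPochNeg c n * (1 + X ^ (c + 2 * n)) :=
  prod_range_succ _ _

lemma qPochInv_succ (c n : ℕ) :
    (qPochInv c (n + 1) : R⟦X⟧) = qPochInv c n * invOneSubXPow (c + 2 * n) :=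
  prod_range_succ _ _

lemma qPochNeg_succ' (c n : ℕ) :
    (qPochNeg c (n + 1) : R⟦X⟧) = (1 + X ^ c) * qPochNeg (c + 2) n := by
  rw [qPochNeg, prod_range_succ', mul_comm]
  congr 1
  exact prod_congr rfl fun j _ => by rw [show c + 2 * (j + 1) = c + 2 + 2 * j by ring]

lemma qPochInv_succ' (c n : ℕ) :
    (qPochInv c (n + 1) : R⟦X⟧) = invOneSubXPow c * qPochInv (c + 2) n := by
  rw [qPochInv, prod_range_succ', mul_comm]
  congr 1
  exact prod_congr rfl fun j _ => by rw [show c + 2 * (j + 1) = c + 2 + 2 * j by ring]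

def SatisfiesShiftEquation (F : ℕ → R⟦X⟧) : Prop :=
  ∀ c, c ≠ 0 →
    (1 - X ^ c) ^ 2 * F c = 1 + X ^ (2 * c) + X ^ (2 * c + 2) * (1 + X ^ c) ^ 2 * F (c + 2)

theorem eq_of_satisfiesShiftEquation {F G : ℕ → R⟦X⟧} (hF : SatisfiesShiftEquation F)
    (hG : SatisfiesShiftEquation G) {c : ℕ} (hc : c ≠ 0) : F c = G c := by
  suffices hdvd : ∀ N c, c ≠ 0 → X ^ N ∣ F c - G c by
    ext m
    rw [← sub_eq_zero, ← map_sub]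
    exact X_pow_dvd_iff.mp (hdvd (m + 1) c hc) m m.lt_succ_self
  intro N
  induction N with
  | zero => exact fun _ _ => one_dvd _
  | succ N ih =>
    intro c hc
    obtain ⟨k, rfl⟩ : ∃ k, c = k + 1 := ⟨c - 1, by omega⟩
    have hrec : F (k + 1) - G (k + 1) = X * (X ^ k * (2 - X ^ (k + 1)) * (F (k + 1) - G (k + 1))
        + X ^ (2 * k + 3) * (1 + X ^ (k + 1)) ^ 2 * (F (k + 3) - G (k + 3))) := by
      linear_combination hF (k + 1) hc - hG (k + 1) hc
    rw [hrec, pow_succ']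
    exact mul_dvd_mul_left X <| dvd_add (dvd_mul_of_dvd_right (ih _ hc) _)
      (dvd_mul_of_dvd_right (ih _ (by omega)) _)

/-- `q^{cn} (-q^c; q²)_n / (q^c; q²)_{n+1}`, the summand of `B(q)` for `c = 1`. -/
noncomputable def bTerm (c n : ℕ) : R⟦X⟧ := X ^ (c * n) * qPochNeg c n * qPochInv c (n + 1)

noncomputable def bSeries (c : ℕ) : R⟦X⟧ := formalSum (bTerm c)

noncomputable def vTerm (c n : ℕ) : R⟦X⟧ :=
  X ^ (c * n) * qPochNeg (c + 2) n * qPochInv (c + 2) (n + 1)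

lemma X_pow_dvd_bTerm {c : ℕ} (hc : c ≠ 0) (n : ℕ) : X ^ n ∣ (bTerm c n : R⟦X⟧) := by
  rw [bTerm, mul_assoc]
  exact (pow_dvd_pow X (Nat.le_mul_of_pos_left n (Nat.pos_of_ne_zero hc))).mul_right _

lemma X_pow_dvd_vTerm {c : ℕ} (hc : c ≠ 0) (n : ℕ) : X ^ n ∣ (vTerm c n : R⟦X⟧) := by
  rw [vTerm, mul_assoc]
  exact (pow_dvd_pow X (Nat.le_mul_of_pos_left n (Nat.pos_of_ne_zero hc))).mul_right _

lemma one_sub_mul_bTerm_zero {c : ℕ} (hc : c ≠ 0) :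
    (1 - X ^ c) * (bTerm c 0 : R⟦X⟧) = 1 := by
  simpa [bTerm, qPochNeg, qPochInv] using one_sub_X_pow_mul_invOneSubXPow hc

lemma one_sub_mul_bTerm_succ {c : ℕ} (hc : c ≠ 0) (n : ℕ) :
    (1 - X ^ c) * (bTerm c (n + 1) : R⟦X⟧) = (1 + X ^ c) * X ^ c * vTerm c n := by
  rw [bTerm, vTerm, qPochNeg_succ', qPochInv_succ']
  linear_combination (X ^ (c * n) * X ^ c * (1 + X ^ c) * qPochNeg (c + 2) n
    * qPochInv (c + 2) (n + 1)) * one_sub_X_pow_mul_invOneSubXPow (R := R) hc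

lemma vTerm_zero (c : ℕ) : (vTerm c 0 : R⟦X⟧) = bTerm (c + 2) 0 := by
  simp [vTerm, bTerm]

lemma vTerm_succ_sub (c n : ℕ) :
    (vTerm c (n + 1) - X ^ c * vTerm c n : R⟦X⟧)
      = X ^ (c + 2) * bTerm (c + 2) (n + 1) + X ^ (2 * c + 2) * bTerm (c + 2) n := by
  have hinv := one_sub_X_pow_mul_invOneSubXPow (R := R) (w := c + 2 + 2 * (n + 1)) (by omega)
  rw [vTerm, vTerm, bTerm, bTerm, qPochNeg_succ, qPochInv_succ (c + 2) (n + 1)]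
  linear_combination (X ^ (c * n + c) * (1 + X ^ (c + 2 * n + 2)) * qPochNeg (c + 2) n
    * qPochInv (c + 2) (n + 1)) * hinv

lemma one_sub_mul_bSeries {c : ℕ} (hc : c ≠ 0) :
    (1 - X ^ c) * (bSeries c : R⟦X⟧) = 1 + (1 + X ^ c) * X ^ c * formalSum (vTerm c) :=
  mul_formalSum_eq_of_succ (X_pow_dvd_bTerm hc) (X_pow_dvd_vTerm hc) (one_sub_mul_bTerm_zero hc)
    (one_sub_mul_bTerm_succ hc)

lemma one_sub_mul_formalSum_vTerm {c : ℕ} (hc : c ≠ 0) :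
    (1 - X ^ c) * formalSum (vTerm c : ℕ → R⟦X⟧)
      = 1 + (X ^ (c + 2) + X ^ (2 * c + 2)) * bSeries (c + 2) := by
  have hc2 : c + 2 ≠ 0 := by omega
  have hV := formalSum_eq_add_shift (X_pow_dvd_vTerm (R := R) hc)
  have hB := formalSum_eq_add_shift (X_pow_dvd_bTerm (R := R) hc2)
  have hsucc : formalSum (fun n => vTerm c (n + 1)) - X ^ c * formalSum (vTerm c)
      = X ^ (c + 2) * formalSum (fun n => bTerm (c + 2) (n + 1))
        + X ^ (2 * c + 2) * (bSeries (c + 2) : R⟦X⟧) := by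
    rw [← formalSum_mul_left _ (X_pow_dvd_vTerm hc), ← formalSum_sub, bSeries,
      ← formalSum_mul_left _ (X_pow_dvd_shift (X_pow_dvd_bTerm hc2)),
      ← formalSum_mul_left _ (X_pow_dvd_bTerm hc2), ← formalSum_add]
    simp only [vTerm_succ_sub]
  rw [bSeries] at hsucc ⊢
  linear_combination hV + hsucc - X ^ (c + 2) * hB + vTerm_zero (R := R) c
    + one_sub_mul_bTerm_zero (R := R) hc2

theorem satisfiesShiftEquation_bSeries : SatisfiesShiftEquation (bSeries : ℕ → R⟦X⟧) := by
  intro c hc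
  linear_combination (1 - X ^ c) * one_sub_mul_bSeries (R := R) hc
    + (1 + X ^ c) * X ^ c * one_sub_mul_formalSum_vTerm (R := R) hc

/-- `∑ₖ k X^{wk} = X^w / (1 - X^w)²`. -/
noncomputable def sumNatMulXPow (w : ℕ) : R⟦X⟧ :=
  mk fun t => if w ∣ t then ((t / w : ℕ) : R) else 0

lemma one_sub_X_sq_mul_mk_natCast : (1 - X) ^ 2 * PowerSeries.mk (fun k => (k : R)) = X := by
  have hmk : PowerSeries.mk (fun k => (k : R))
      = X * PowerSeries.mk fun n => ((Nat.choose (1 + n) 1 : ℕ) : R) := by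
    ext (_ | n)
    · simp
    · rw [coeff_succ_X_mul]
      simp [add_comm]
  rw [hmk, mul_left_comm, mul_comm ((1 - X) ^ 2), mk_add_choose_mul_one_sub_pow_eq_one, mul_one]

lemma one_sub_X_pow_sq_mul_sumNatMulXPow {w : ℕ} (hw : w ≠ 0) :
    (1 - X ^ w) ^ 2 * (sumNatMulXPow w : R⟦X⟧) = X ^ w := by
  have hexpand : (sumNatMulXPow w : R⟦X⟧) = expand w hw (PowerSeries.mk fun k => (k : R)) := by
    ext t
    rw [coeff_expand, sumNatMulXPow, coeff_mk, coeff_mk]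
  rw [hexpand, ← expand_X w hw, ← map_one (expand w hw), ← map_sub, ← map_pow, ← map_mul,
    one_sub_X_sq_mul_mk_natCast]

lemma map_sumNatMulXPow {S : Type*} [CommRing S] (φ : R →+* S) (w : ℕ) :
    map φ (sumNatMulXPow w) = sumNatMulXPow w := by
  ext t
  simp only [coeff_map, sumNatMulXPow, coeff_mk]
  split_ifs <;> simp

/-- `q^{2cn+2n²} (1 + q^{2c+4n}) (-q^c; q²)_n² / (q^c; q²)_{n+1}²`, written with
`(1 + x²) / (1 - x)² = 1 + 2x / (1 - x)²` and `(1 + x)² / (1 - x)² = 1 + 4x / (1 - x)²`. -/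
noncomputable def gTerm (c n : ℕ) : R⟦X⟧ :=
  X ^ (2 * c * n + 2 * n ^ 2) * (1 + 2 * sumNatMulXPow (c + 2 * n))
    * ∏ j ∈ range n, (1 + 4 * sumNatMulXPow (c + 2 * j))

noncomputable def gSeries (c : ℕ) : R⟦X⟧ := formalSum (gTerm c)

lemma X_pow_dvd_gTerm (c n : ℕ) : X ^ n ∣ (gTerm c n : R⟦X⟧) := by
  rw [gTerm, mul_assoc]
  exact (pow_dvd_pow X (by nlinarith)).mul_right _

lemma one_sub_sq_mul_gTerm_zero {c : ℕ} (hc : c ≠ 0) :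
    (1 - X ^ c) ^ 2 * (gTerm c 0 : R⟦X⟧) = 1 + X ^ (2 * c) := by
  simp only [gTerm, mul_zero, zero_pow two_ne_zero, add_zero, pow_zero, one_mul,
    range_zero, prod_empty, mul_one]
  linear_combination 2 * one_sub_X_pow_sq_mul_sumNatMulXPow (R := R) hc

lemma one_sub_sq_mul_gTerm_succ {c : ℕ} (hc : c ≠ 0) (n : ℕ) :
    (1 - X ^ c) ^ 2 * (gTerm c (n + 1) : R⟦X⟧)
      = X ^ (2 * c + 2) * (1 + X ^ c) ^ 2 * gTerm (c + 2) n := by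
  have hprod : ∏ j ∈ range (n + 1), (1 + 4 * (sumNatMulXPow (c + 2 * j) : R⟦X⟧))
      = (1 + 4 * sumNatMulXPow c) * ∏ j ∈ range n, (1 + 4 * sumNatMulXPow (c + 2 + 2 * j)) := by
    rw [prod_range_succ', mul_comm]
    congr 1
    exact prod_congr rfl fun j _ => by rw [show c + 2 * (j + 1) = c + 2 + 2 * j by ring]
  rw [gTerm, gTerm, hprod, show c + 2 * (n + 1) = c + 2 + 2 * n by ring]
  linear_combination (4 * X ^ (2 * c * (n + 1) + 2 * (n + 1) ^ 2)
    * (1 + 2 * sumNatMulXPow (c + 2 + 2 * n))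
    * ∏ j ∈ range n, (1 + 4 * sumNatMulXPow (c + 2 + 2 * j)))
    * one_sub_X_pow_sq_mul_sumNatMulXPow (R := R) hc

theorem satisfiesShiftEquation_gSeries : SatisfiesShiftEquation (gSeries : ℕ → R⟦X⟧) :=
  fun _ hc => mul_formalSum_eq_of_succ (X_pow_dvd_gTerm _) (X_pow_dvd_gTerm _)
    (one_sub_sq_mul_gTerm_zero hc) (one_sub_sq_mul_gTerm_succ hc)

lemma mockBterm_eq_bTerm (n : ℕ) : mockBterm n = bTerm 1 n := by
  have hinv : invOfUnit (∏ j ∈ range (n + 1), (1 - (X : ℤ⟦X⟧) ^ (2 * j + 1))) 1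
      = qPochInv 1 (n + 1) := by
    refine left_inv_eq_right_inv (invOfUnit_mul _ _ (by simp)) ?_
    rw [qPochInv, ← prod_mul_distrib]
    exact prod_eq_one fun j _ => by
      rw [add_comm (2 * j)]
      exact one_sub_X_pow_mul_invOneSubXPow (by omega)
  rw [mockBterm, bTerm, hinv, one_mul, qPochNeg]
  congr 2
  exact prod_congr rfl fun j _ => by rw [add_comm (2 * j)]

theorem mockB_eq_gSeries : mockB = gSeries 1 := by
  have hB : mockB = bSeries 1 := by
    rw [bSeries, ← funext mockBterm_eq_bTerm]
    rfl
  rw [hB, eq_of_satisfiesShiftEquation satisfiesShiftEquation_bSeries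
    satisfiesShiftEquation_gSeries one_ne_zero]

lemma map_formalSum {S : Type*} [CommRing S] (φ : R →+* S) (f : ℕ → R⟦X⟧) :
    map φ (formalSum f) = formalSum fun n => map φ (f n) := by
  ext N
  simp only [coeff_map, coeff_formalSum, map_sum]

lemma map_gTerm {S : Type*} [CommRing S] (φ : R →+* S) (c n : ℕ) :
    map φ (gTerm c n) = gTerm c n := by
  simp [gTerm, map_prod, map_ofNat, map_sumNatMulXPow]

lemma coeff_ofNat_mul (k : ℕ) [k.AtLeastTwo] (t : ℕ) (f : R⟦X⟧) :
    coeff t ((OfNat.ofNat k : R⟦X⟧) * f) = OfNat.ofNat k * coeff t f := by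
  rw [← map_ofNat C, coeff_C_mul]

lemma prod_one_add_mul_of_mul_self_eq_zero {ι : Type*} {e : R} (he : e * e = 0) (s : Finset ι)
    (a : ι → R) : ∏ i ∈ s, (1 + e * a i) = 1 + e * ∑ i ∈ s, a i := by
  classical
  induction s using Finset.induction_on with
  | empty => simp
  | insert i s hi ih =>
    rw [prod_insert hi, sum_insert hi, ih]
    linear_combination a i * (∑ j ∈ s, a j) * he

lemma eight_eq_zero : (8 : (ZMod 8)⟦X⟧) = 0 := by
  have h : ((8 : ℕ) : (ZMod 8)⟦X⟧) = 0 := by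
    rw [← map_natCast C, ZMod.natCast_self, map_zero]
  exact_mod_cast h

lemma gTerm_zmod_eight (c n : ℕ) :
    (gTerm c n : (ZMod 8)⟦X⟧) = X ^ (2 * c * n + 2 * n ^ 2) * (1 + 2 * sumNatMulXPow (c + 2 * n)
      + 4 * ∑ j ∈ range n, sumNatMulXPow (c + 2 * j)) := by
  rw [gTerm, prod_one_add_mul_of_mul_self_eq_zero (by linear_combination 2 * eight_eq_zero)]
  linear_combination X ^ (2 * c * n + 2 * n ^ 2) * sumNatMulXPow (c + 2 * n)
    * (∑ j ∈ range n, sumNatMulXPow (c + 2 * j)) * eight_eq_zero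

lemma two_mul_coeff_sumNatMulXPow_eq_zero {w t : ℕ} (hw : Odd w) (ht : 4 ∣ t) :
    (2 : ZMod 8) * coeff t (sumNatMulXPow w) = 0 := by
  rw [sumNatMulXPow, coeff_mk]
  split_ifs with hwt
  · obtain ⟨k, rfl⟩ := hwt
    have hcop : Nat.Coprime (2 ^ 2) w := Nat.Coprime.pow_left 2 (Nat.coprime_two_left.mpr hw)
    obtain ⟨i, rfl⟩ := hcop.dvd_of_dvd_mul_left ht
    rw [Nat.mul_div_cancel_left _ hw.pos]
    push_cast
    have h8 : (8 : ZMod 8) = 0 := by decide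
    linear_combination (i : ZMod 8) * h8
  · rw [mul_zero]

lemma coeff_gTerm_zmod_eight {c N : ℕ} (hc : Odd c) (hN : 4 ∣ N) (n : ℕ) :
    coeff N (gTerm c n : (ZMod 8)⟦X⟧) = if N = 2 * c * n + 2 * n ^ 2 then 1 else 0 := by
  have hodd : ∀ j, Odd (c + 2 * j) := fun j => hc.add_even (even_two_mul j)
  have hE : 4 ∣ 2 * c * n + 2 * n ^ 2 := by
    obtain ⟨m, hm⟩ : Even (n * (c + n)) := by
      rcases Nat.even_or_odd n with hn | hn
      · exact hn.mul_right _
      · exact (hc.add_odd hn).mul_left _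
    exact ⟨m, by linear_combination 2 * hm⟩
  rw [gTerm_zmod_eight, coeff_X_pow_mul']
  by_cases hle : 2 * c * n + 2 * n ^ 2 ≤ N
  · have ht : 4 ∣ N - (2 * c * n + 2 * n ^ 2) := Nat.dvd_sub hN hE
    have hsum : (4 : ZMod 8) * ∑ j ∈ range n, coeff (N - (2 * c * n + 2 * n ^ 2))
        (sumNatMulXPow (c + 2 * j)) = 0 := by
      rw [mul_sum]
      refine sum_eq_zero fun j _ => ?_
      rw [show (4 : ZMod 8) = 2 * 2 by decide, mul_assoc,
        two_mul_coeff_sumNatMulXPow_eq_zero (hodd j) ht, mul_zero]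
    rw [if_pos hle, map_add, map_add, coeff_ofNat_mul, coeff_ofNat_mul, map_sum, hsum,
      two_mul_coeff_sumNatMulXPow_eq_zero (hodd n) ht, coeff_one, add_zero, add_zero]
    exact if_congr (by omega) rfl rfl
  · rw [if_neg hle, if_neg (by omega)]

end MockThetaB

open MockThetaB in
theorem b_four_mul_modEq_zero {m : ℕ} (hm : ¬IsSquare (8 * m + 1)) :
    b (4 * m) ≡ 0 [ZMOD 8] := by
  refine (ZMod.intCast_eq_intCast_iff _ 0 8).mp ?_
  rw [Int.cast_zero, b, mockB_eq_gSeries, ← eq_intCast (Int.castRingHom (ZMod 8)), ← coeff_map,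
    gSeries, map_formalSum, coeff_formalSum]
  refine sum_eq_zero fun n _ => ?_
  rw [map_gTerm, coeff_gTerm_zmod_eight odd_one (dvd_mul_right 4 m), if_neg]
  intro h
  exact hm ⟨2 * n + 1, by linear_combination 2 * h⟩

theorem b_four_pn_ell_general (p ℓ : ℕ) [Fact p.Prime]
    (hleg : legendreSym p (8 * (ℓ : ℤ) + 1) = -1) :
    ∀ n : ℕ, b (4 * (p * n + ℓ)) ≡ 0 [ZMOD 8] := by
  intro n
  refine b_four_mul_modEq_zero fun ⟨r, hr⟩ => (legendreSym.eq_neg_one_iff p).mp hleg ⟨r, ?_⟩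
  have h := congrArg (Nat.cast : ℕ → ZMod p) hr
  push_cast [ZMod.natCast_self] at h ⊢
  linear_combination h

/-- Let `p` be an odd prime and `1 ≤ ℓ ≤ p − 1` with `((8ℓ+1)/p) = −1`. Then for all
`n ≥ 0`, `b(4(pn + ℓ)) ≡ 0 (mod 8)`. -/
theorem b_four_pn_ell (p ℓ : ℕ) [Fact p.Prime] (hodd : Odd p)
    (hl1 : 1 ≤ ℓ) (hl2 : ℓ ≤ p - 1)
    (hleg : legendreSym p (8 * (ℓ : ℤ) + 1) = -1) :
    ∀ n : ℕ, b (4 * (p * n + ℓ)) ≡ 0 [ZMOD 8] :=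
  b_four_pn_ell_general p ℓ hleg
end
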